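/- Let (X₁;μ₁,η₁,δ₁,ε₁) and (X₂;μ₂,η₂,δ₂,ε₂) be Frobenius algebras in Rel, and let h : X₁ → X₂ be a map such that: (a) a ∈ η₁ implies h(a) ∈ η₂; (b) μ₁:(a,b)↦c implies μ₂:(h(a),h(b))↦h(c); (c) e ∈ ε₁ implies h(e) ∈ ε₂. Then h also preserves comultiplication: δ₁:a↦(b,c) implies δ₂:h(a)↦(h(b),h(c)). In other words, a monoid homomorphism preserving counit elements is a Frobenius algebra homomorphism. -/

import Mathlib

/-!
In a Frobenius algebra in Rel the comultiplication is determined by the multiplication and the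
counit. The copairing `cup u z := ∃ r ∈ η, δ r u z` and the pairing `cap z u := ∃ e ∈ ε, μ z u e`
satisfy the snake equations, so as relations they are mutually inverse: `cup u z ↔ cap z u`.
The Frobenius law applied to `μ a r a` with `r ∈ η` gives `δ a y z ↔ ∃ u, cup u z ∧ μ a u y`,
hence `δ a y z ↔ ∃ u, cap z u ∧ μ a u y`. A map preserving `μ` and `ε` preserves the right-hand
side, hence `δ`.
-/

theorem iff_flip_of_snake {α β : Type*} {R : α → β → Prop} {S : β → α → Prop}
    (hRS : ∀ a a', (∃ b, R a b ∧ S b a') ↔ a = a')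
    (hSR : ∀ b b', (∃ a, S b a ∧ R a b') ↔ b = b') (a : α) (b : β) :
    R a b ↔ S b a := by
  constructor
  · intro hab
    obtain ⟨b', hab', hb'a⟩ := (hRS a a).mpr rfl
    obtain rfl : b' = b := (hSR b' b).mp ⟨a, hb'a, hab⟩
    exact hb'a
  · intro hba
    obtain ⟨a', hba', ha'b⟩ := (hSR b b).mpr rfl
    obtain rfl : a' = a := (hRS a' a).mp ⟨b, ha'b, hba⟩
    exact ha'b

namespace RelFrobenius

variable {X : Type*} {μ δ : X → X → X → Prop} {η ε : Set X}

def cup (δ : X → X → X → Prop) (η : Set X) (u z : X) : Prop := ∃ r ∈ η, δ r u z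

def cap (μ : X → X → X → Prop) (ε : Set X) (z u : X) : Prop := ∃ e ∈ ε, μ z u e

theorem mul_iff_exists_comul_cap_left
    (hcounitR : ∀ a b : X, (∃ e ∈ ε, δ a b e) ↔ a = b)
    (hfrob₂ : ∀ a b y z : X, (∃ c, μ a b c ∧ δ c y z) ↔ (∃ v, δ a y v ∧ μ v b z))
    (a b y : X) : μ a b y ↔ ∃ v, δ a y v ∧ cap μ ε v b := by
  constructor
  · intro hab
    obtain ⟨e, he, hy⟩ := (hcounitR y y).mpr rfl
    obtain ⟨v, hav, hvb⟩ := (hfrob₂ a b y e).mp ⟨y, hab, hy⟩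
    exact ⟨v, hav, e, he, hvb⟩
  · rintro ⟨v, hav, e, he, hvb⟩
    obtain ⟨c, hab, hc⟩ := (hfrob₂ a b y e).mpr ⟨v, hav, hvb⟩
    rwa [← (hcounitR c y).mp ⟨e, he, hc⟩]

theorem mul_iff_exists_comul_cap_right
    (hcounitL : ∀ a b : X, (∃ e ∈ ε, δ a e b) ↔ a = b)
    (hfrob₁ : ∀ a b y z : X, (∃ c, μ a b c ∧ δ c y z) ↔ (∃ u, δ b u z ∧ μ a u y))
    (a b z : X) : μ a b z ↔ ∃ u, δ b u z ∧ cap μ ε a u := by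
  constructor
  · intro hab
    obtain ⟨e, he, hz⟩ := (hcounitL z z).mpr rfl
    obtain ⟨u, hbu, hau⟩ := (hfrob₁ a b e z).mp ⟨z, hab, hz⟩
    exact ⟨u, hbu, e, he, hau⟩
  · rintro ⟨u, hbu, e, he, hau⟩
    obtain ⟨c, hab, hc⟩ := (hfrob₁ a b e z).mpr ⟨u, hbu, hau⟩
    rwa [← (hcounitL c z).mp ⟨e, he, hc⟩]

theorem comul_iff_exists_cup_mul
    (hunitR : ∀ a b : X, (∃ r ∈ η, μ a r b) ↔ a = b)
    (hfrob₁ : ∀ a b y z : X, (∃ c, μ a b c ∧ δ c y z) ↔ (∃ u, δ b u z ∧ μ a u y))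
    (a y z : X) : δ a y z ↔ ∃ u, cup δ η u z ∧ μ a u y := by
  constructor
  · intro hd
    obtain ⟨r, hr, har⟩ := (hunitR a a).mpr rfl
    obtain ⟨u, hru, hau⟩ := (hfrob₁ a r y z).mp ⟨a, har, hd⟩
    exact ⟨u, ⟨r, hr, hru⟩, hau⟩
  · rintro ⟨u, ⟨r, hr, hru⟩, hau⟩
    obtain ⟨c, har, hc⟩ := (hfrob₁ a r y z).mpr ⟨u, hru, hau⟩
    rwa [(hunitR a c).mp ⟨r, hr, har⟩]

theorem cap_cup_snake
    (hunitR : ∀ a b : X, (∃ r ∈ η, μ a r b) ↔ a = b)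
    (hcounitL : ∀ a b : X, (∃ e ∈ ε, δ a e b) ↔ a = b)
    (hfrob₁ : ∀ a b y z : X, (∃ c, μ a b c ∧ δ c y z) ↔ (∃ u, δ b u z ∧ μ a u y))
    (a z : X) : (∃ u, cap μ ε a u ∧ cup δ η u z) ↔ a = z := by
  constructor
  · rintro ⟨u, hau, r, hr, hru⟩
    have har : μ a r z := (mul_iff_exists_comul_cap_right hcounitL hfrob₁ a r z).mpr ⟨u, hru, hau⟩
    exact (hunitR a z).mp ⟨r, hr, har⟩
  · rintro rfl
    obtain ⟨r, hr, har⟩ := (hunitR a a).mpr rfl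
    obtain ⟨u, hru, hau⟩ := (mul_iff_exists_comul_cap_right hcounitL hfrob₁ a r a).mp har
    exact ⟨u, hau, r, hr, hru⟩

theorem cup_cap_snake
    (hunitL : ∀ a b : X, (∃ r ∈ η, μ r a b) ↔ a = b)
    (hcounitR : ∀ a b : X, (∃ e ∈ ε, δ a b e) ↔ a = b)
    (hfrob₂ : ∀ a b y z : X, (∃ c, μ a b c ∧ δ c y z) ↔ (∃ v, δ a y v ∧ μ v b z))
    (u u' : X) : (∃ z, cup δ η u z ∧ cap μ ε z u') ↔ u = u' := by
  constructor
  · rintro ⟨z, ⟨r, hr, hru⟩, hzu'⟩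
    have hru' : μ r u' u :=
      (mul_iff_exists_comul_cap_left hcounitR hfrob₂ r u' u).mpr ⟨z, hru, hzu'⟩
    exact ((hunitL u' u).mp ⟨r, hr, hru'⟩).symm
  · rintro rfl
    obtain ⟨r, hr, hru⟩ := (hunitL u u).mpr rfl
    obtain ⟨z, hruz, hzu⟩ := (mul_iff_exists_comul_cap_left hcounitR hfrob₂ r u u).mp hru
    exact ⟨z, ⟨r, hr, hruz⟩, hzu⟩

theorem cap_iff_cup
    (hunitL : ∀ a b : X, (∃ r ∈ η, μ r a b) ↔ a = b)
    (hunitR : ∀ a b : X, (∃ r ∈ η, μ a r b) ↔ a = b)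
    (hcounitL : ∀ a b : X, (∃ e ∈ ε, δ a e b) ↔ a = b)
    (hcounitR : ∀ a b : X, (∃ e ∈ ε, δ a b e) ↔ a = b)
    (hfrob₁ : ∀ a b y z : X, (∃ c, μ a b c ∧ δ c y z) ↔ (∃ u, δ b u z ∧ μ a u y))
    (hfrob₂ : ∀ a b y z : X, (∃ c, μ a b c ∧ δ c y z) ↔ (∃ v, δ a y v ∧ μ v b z))
    (z u : X) : cap μ ε z u ↔ cup δ η u z :=
  iff_flip_of_snake (cap_cup_snake hunitR hcounitL hfrob₁) (cup_cap_snake hunitL hcounitR hfrob₂)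
    z u

theorem comul_iff_exists_cap_mul
    (hunitL : ∀ a b : X, (∃ r ∈ η, μ r a b) ↔ a = b)
    (hunitR : ∀ a b : X, (∃ r ∈ η, μ a r b) ↔ a = b)
    (hcounitL : ∀ a b : X, (∃ e ∈ ε, δ a e b) ↔ a = b)
    (hcounitR : ∀ a b : X, (∃ e ∈ ε, δ a b e) ↔ a = b)
    (hfrob₁ : ∀ a b y z : X, (∃ c, μ a b c ∧ δ c y z) ↔ (∃ u, δ b u z ∧ μ a u y))
    (hfrob₂ : ∀ a b y z : X, (∃ c, μ a b c ∧ δ c y z) ↔ (∃ v, δ a y v ∧ μ v b z))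
    (a y z : X) : δ a y z ↔ ∃ u, cap μ ε z u ∧ μ a u y := by
  simp only [comul_iff_exists_cup_mul hunitR hfrob₁,
    cap_iff_cup hunitL hunitR hcounitL hcounitR hfrob₁ hfrob₂]

end RelFrobenius

open RelFrobenius in
theorem relFrobenius_hom_preserves_delta_general
    {X₁ X₂ : Type*}
    (μ₁ δ₁ : X₁ → X₁ → X₁ → Prop) (η₁ ε₁ : Set X₁)
    (μ₂ δ₂ : X₂ → X₂ → X₂ → Prop) (η₂ ε₂ : Set X₂)
    -- X₁ is a Frobenius algebra in Rel
    (hunitL₁ : ∀ a b : X₁, (∃ r ∈ η₁, μ₁ r a b) ↔ a = b)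
    (hunitR₁ : ∀ a b : X₁, (∃ r ∈ η₁, μ₁ a r b) ↔ a = b)
    (hcounitL₁ : ∀ a b : X₁, (∃ e ∈ ε₁, δ₁ a e b) ↔ a = b)
    (hcounitR₁ : ∀ a b : X₁, (∃ e ∈ ε₁, δ₁ a b e) ↔ a = b)
    (hfrob₁₁ : ∀ a b y z : X₁,
      (∃ c, μ₁ a b c ∧ δ₁ c y z) ↔ (∃ u, δ₁ b u z ∧ μ₁ a u y))
    (hfrob₂₁ : ∀ a b y z : X₁,
      (∃ c, μ₁ a b c ∧ δ₁ c y z) ↔ (∃ v, δ₁ a y v ∧ μ₁ v b z))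
    -- X₂ is a Frobenius algebra in Rel
    (hunitL₂ : ∀ a b : X₂, (∃ r ∈ η₂, μ₂ r a b) ↔ a = b)
    (hunitR₂ : ∀ a b : X₂, (∃ r ∈ η₂, μ₂ a r b) ↔ a = b)
    (hcounitL₂ : ∀ a b : X₂, (∃ e ∈ ε₂, δ₂ a e b) ↔ a = b)
    (hcounitR₂ : ∀ a b : X₂, (∃ e ∈ ε₂, δ₂ a b e) ↔ a = b)
    (hfrob₁₂ : ∀ a b y z : X₂,
      (∃ c, μ₂ a b c ∧ δ₂ c y z) ↔ (∃ u, δ₂ b u z ∧ μ₂ a u y))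
    (hfrob₂₂ : ∀ a b y z : X₂,
      (∃ c, μ₂ a b c ∧ δ₂ c y z) ↔ (∃ v, δ₂ a y v ∧ μ₂ v b z))
    -- h is a monoid homomorphism preserving counit elements
    (h : X₁ → X₂)
    (hμ : ∀ a b c : X₁, μ₁ a b c → μ₂ (h a) (h b) (h c))
    (hε : ∀ e : X₁, e ∈ ε₁ → h e ∈ ε₂) :
    ∀ a b c : X₁, δ₁ a b c → δ₂ (h a) (h b) (h c) := by
  intro a b c hd
  obtain ⟨u, ⟨e, he, hcu⟩, hau⟩ :=
    (comul_iff_exists_cap_mul hunitL₁ hunitR₁ hcounitL₁ hcounitR₁ hfrob₁₁ hfrob₂₁ a b c).mp hd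
  exact (comul_iff_exists_cap_mul hunitL₂ hunitR₂ hcounitL₂ hcounitR₂ hfrob₁₂ hfrob₂₂
    (h a) (h b) (h c)).mpr ⟨h u, ⟨h e, hε e he, hμ c u e hcu⟩, hμ a u b hau⟩

/-- a monoid homomorphism between Frobenius algebras in Rel which
preserves counit elements also preserves the comultiplication δ, hence is a
Frobenius algebra homomorphism. -/
theorem relFrobenius_hom_preserves_delta
    {X₁ X₂ : Type*}
    (μ₁ δ₁ : X₁ → X₁ → X₁ → Prop) (η₁ ε₁ : Set X₁)
    (μ₂ δ₂ : X₂ → X₂ → X₂ → Prop) (η₂ ε₂ : Set X₂)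
    -- X₁ is a Frobenius algebra in Rel
    (hassoc₁ : ∀ a b c d : X₁,
      (∃ x, μ₁ a b x ∧ μ₁ x c d) ↔ (∃ y, μ₁ b c y ∧ μ₁ a y d))
    (hunitL₁ : ∀ a b : X₁, (∃ r ∈ η₁, μ₁ r a b) ↔ a = b)
    (hunitR₁ : ∀ a b : X₁, (∃ r ∈ η₁, μ₁ a r b) ↔ a = b)
    (hcoassoc₁ : ∀ a x y z : X₁,
      (∃ u, δ₁ a u z ∧ δ₁ u x y) ↔ (∃ v, δ₁ a x v ∧ δ₁ v y z))
    (hcounitL₁ : ∀ a b : X₁, (∃ e ∈ ε₁, δ₁ a e b) ↔ a = b)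
    (hcounitR₁ : ∀ a b : X₁, (∃ e ∈ ε₁, δ₁ a b e) ↔ a = b)
    (hfrob₁₁ : ∀ a b y z : X₁,
      (∃ c, μ₁ a b c ∧ δ₁ c y z) ↔ (∃ u, δ₁ b u z ∧ μ₁ a u y))
    (hfrob₂₁ : ∀ a b y z : X₁,
      (∃ c, μ₁ a b c ∧ δ₁ c y z) ↔ (∃ v, δ₁ a y v ∧ μ₁ v b z))
    -- X₂ is a Frobenius algebra in Rel
    (hassoc₂ : ∀ a b c d : X₂,
      (∃ x, μ₂ a b x ∧ μ₂ x c d) ↔ (∃ y, μ₂ b c y ∧ μ₂ a y d))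
    (hunitL₂ : ∀ a b : X₂, (∃ r ∈ η₂, μ₂ r a b) ↔ a = b)
    (hunitR₂ : ∀ a b : X₂, (∃ r ∈ η₂, μ₂ a r b) ↔ a = b)
    (hcoassoc₂ : ∀ a x y z : X₂,
      (∃ u, δ₂ a u z ∧ δ₂ u x y) ↔ (∃ v, δ₂ a x v ∧ δ₂ v y z))
    (hcounitL₂ : ∀ a b : X₂, (∃ e ∈ ε₂, δ₂ a e b) ↔ a = b)
    (hcounitR₂ : ∀ a b : X₂, (∃ e ∈ ε₂, δ₂ a b e) ↔ a = b)
    (hfrob₁₂ : ∀ a b y z : X₂,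
      (∃ c, μ₂ a b c ∧ δ₂ c y z) ↔ (∃ u, δ₂ b u z ∧ μ₂ a u y))
    (hfrob₂₂ : ∀ a b y z : X₂,
      (∃ c, μ₂ a b c ∧ δ₂ c y z) ↔ (∃ v, δ₂ a y v ∧ μ₂ v b z))
    -- h is a monoid homomorphism preserving counit elements
    (h : X₁ → X₂)
    (hη : ∀ a : X₁, a ∈ η₁ → h a ∈ η₂)
    (hμ : ∀ a b c : X₁, μ₁ a b c → μ₂ (h a) (h b) (h c))
    (hε : ∀ e : X₁, e ∈ ε₁ → h e ∈ ε₂) :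
    ∀ a b c : X₁, δ₁ a b c → δ₂ (h a) (h b) (h c) :=
  relFrobenius_hom_preserves_delta_general μ₁ δ₁ η₁ ε₁ μ₂ δ₂ η₂ ε₂ hunitL₁ hunitR₁ hcounitL₁
    hcounitR₁ hfrob₁₁ hfrob₂₁ hunitL₂ hunitR₂ hcounitL₂ hcounitR₂ hfrob₁₂ hfrob₂₂ h hμ hε
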